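/- (Robustness of binary N-state distributions.) Fix N ≥ 2 and a real ε with 0 ≤ ε ≤ ½. Then for every triple (p, p̃, (i, j)) in the perturbed-pair family 𝒫(ε) and every state s, |p̃ s − p s| ≤ 3ε; moreover the boundary states satisfy the stronger bounds |p̃ i − p i| ≤ 2ε and |p̃ j − p j| ≤ 2ε. -/

import Mathlib

/-! If the support of `p` lies below `k` and that of `u` above `k`, then `p ⊕ (h ∗ u)` with
`h = a·δ₀ + b·δ_{N-1}` is just the mixture `a·p + b·u` (for probability vectors `p`, `u`).
So at every state the error of a step is at most half the errors of `p` and `u` there, plus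
`|ε̂|·|p̃ s - ũ s| ≤ ε`. Away from the shared state `k` one of the two errors vanishes, giving
`3ε/2 + ε`; at `k` both are boundary errors, giving `ε + ε + ε`. At the outer boundary `i`,
either `u` vanishes there, or `i = k` and `p = p̃ = δ_i`; either way the error is at most
`ε + ε`, and symmetrically at `j`. -/

noncomputable section

/-- Series composition: distribution of `min` of two independent states. -/
def smin {N : ℕ} (p q : Fin N → ℝ) : Fin N → ℝ :=
  fun k => ∑ i, ∑ j, if min i j = k then p i * q j else 0

/-- Parallel composition: distribution of `max` of two independent states. -/
def smax {N : ℕ} (p q : Fin N → ℝ) : Fin N → ℝ :=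
  fun k => ∑ i, ∑ j, if max i j = k then p i * q j else 0

/-- The point mass at state `s`. -/
def delta {N : ℕ} (s : Fin N) : Fin N → ℝ := fun i => if i = s then 1 else 0

/-- The vector with value `a` at state `0`, `b` at state `N-1`, `0` elsewhere
(i.e. `a·δ₀ + b·δ_{N-1}` for `N ≥ 2`). -/
def endSwitch (N : ℕ) (a b : ℝ) : Fin N → ℝ :=
  fun i => (if (i : ℕ) = 0 then a else 0) + (if (i : ℕ) = N - 1 then b else 0)

/-- The perturbed-pair family `𝒫(ε)`: triples `(p, p̃, (i, j))`, where `p` is the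
ideal distribution built by the binary `N`-state construction on states
`i, …, j` and `p̃` is the distribution of the same circuit in which each
½-pswitch `½·δ₀ + ½·δ_{N-1}` is perturbed to `(½+ε̂)·δ₀ + (½-ε̂)·δ_{N-1}` with
`|ε̂| ≤ ε`. -/
inductive Pert (N : ℕ) (ε : ℝ) :
    (Fin N → ℝ) → (Fin N → ℝ) → Fin N → Fin N → Prop
  | point (s : Fin N) : Pert N ε (delta s) (delta s) s s
  | step {p p' u u' : Fin N → ℝ} {i k j : Fin N} {ε' : ℝ} :
      Pert N ε p p' i k → Pert N ε u u' k j →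
      (∀ t, p t ≠ 0 → i ≤ t ∧ t ≤ k) → (∀ t, p' t ≠ 0 → i ≤ t ∧ t ≤ k) →
      (∀ t, u t ≠ 0 → k ≤ t ∧ t ≤ j) → (∀ t, u' t ≠ 0 → k ≤ t ∧ t ≤ j) →
      |ε'| ≤ ε →
      Pert N ε (smax p (smin (endSwitch N (1 / 2) (1 / 2)) u))
        (smax p' (smin (endSwitch N (1 / 2 + ε') (1 / 2 - ε')) u')) i j

open Finset

variable {N : ℕ}

lemma smin_add_left (p q u : Fin N → ℝ) : smin (p + q) u = smin p u + smin q u := by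
  ext k
  simp only [smin, Pi.add_apply, add_mul, ite_add_zero, sum_add_distrib]

lemma smin_smul_left (a : ℝ) (p u : Fin N → ℝ) : smin (a • p) u = a • smin p u := by
  ext k
  simp only [smin, Pi.smul_apply, smul_eq_mul, mul_sum, mul_ite, mul_zero, mul_assoc]

lemma smax_add_right (p q u : Fin N → ℝ) : smax p (q + u) = smax p q + smax p u := by
  ext k
  simp only [smax, Pi.add_apply, mul_add, ite_add_zero, sum_add_distrib]

lemma smax_smul_right (a : ℝ) (p q : Fin N → ℝ) : smax p (a • q) = a • smax p q := by
  ext k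
  simp only [smax, Pi.smul_apply, smul_eq_mul, mul_sum, mul_ite, mul_zero, mul_left_comm]

lemma smin_delta_left (s : Fin N) (u : Fin N → ℝ) (k : Fin N) :
    smin (delta s) u k = ∑ t, if min s t = k then u t else 0 := by
  rw [smin, Fintype.sum_eq_single s fun i hi => by simp [delta, hi]]
  simp [delta]

lemma smax_delta_right (p : Fin N → ℝ) (s k : Fin N) :
    smax p (delta s) k = ∑ t, if max t s = k then p t else 0 := by
  simp only [smax]
  refine sum_congr rfl fun t _ => ?_
  rw [Fintype.sum_eq_single s fun i hi => by simp [delta, hi]]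
  simp [delta]

lemma smin_delta_of_forall_le {z : Fin N} (hz : ∀ t, z ≤ t) (u : Fin N → ℝ) :
    smin (delta z) u = (∑ t, u t) • delta z := by
  ext k
  simp [smin_delta_left, min_eq_left (hz _), delta, eq_comm]

lemma smin_delta_of_forall_ge {l : Fin N} (hl : ∀ t, t ≤ l) (u : Fin N → ℝ) :
    smin (delta l) u = u := by
  ext k
  simp [smin_delta_left, min_eq_right (hl _)]

lemma smax_delta_of_forall_le {z : Fin N} (hz : ∀ t, z ≤ t) (p : Fin N → ℝ) :
    smax p (delta z) = p := by
  ext k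
  simp [smax_delta_right, max_eq_left (hz _)]

lemma smax_eq_smul_of_support_le {p q : Fin N → ℝ} {k : Fin N} (hp : ∀ t, p t ≠ 0 → t ≤ k)
    (hq : ∀ t, q t ≠ 0 → k ≤ t) : smax p q = (∑ t, p t) • q := by
  ext s
  have hterm : ∀ t t', (if max t t' = s then p t * q t' else 0) =
      if t' = s then p t * q t' else 0 := by
    intro t t'
    by_cases h : p t * q t' = 0
    · simp [h]
    · rw [max_eq_right ((hp t (left_ne_zero_of_mul h)).trans (hq t' (right_ne_zero_of_mul h)))]
  simp [smax, hterm, sum_mul]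

lemma endSwitch_eq {z l : Fin N} (hz : (z : ℕ) = 0) (hl : (l : ℕ) = N - 1) (a b : ℝ) :
    endSwitch N a b = a • delta z + b • delta l := by
  ext t
  simp [endSwitch, delta, Fin.ext_iff, hz, hl]

lemma smax_smin_endSwitch {p u : Fin N → ℝ} {k : Fin N} (hp : ∀ t, p t ≠ 0 → t ≤ k)
    (hu : ∀ t, u t ≠ 0 → k ≤ t) (a b : ℝ) :
    smax p (smin (endSwitch N a b) u) = (a * ∑ t, u t) • p + (b * ∑ t, p t) • u := by
  have hN := k.pos
  have hz : ∀ t : Fin N, (⟨0, hN⟩ : Fin N) ≤ t := fun t => Fin.le_def.2 (Nat.zero_le _)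
  have hl : ∀ t : Fin N, t ≤ ⟨N - 1, by omega⟩ := fun t =>
    Fin.le_def.2 (by have := t.isLt; simp only; omega)
  rw [endSwitch_eq (z := ⟨0, hN⟩) (l := ⟨N - 1, by omega⟩) rfl rfl, smin_add_left,
    smin_smul_left, smin_smul_left, smin_delta_of_forall_le hz, smin_delta_of_forall_ge hl,
    smul_smul, smax_add_right, smax_smul_right, smax_smul_right, smax_delta_of_forall_le hz,
    smax_eq_smul_of_support_le hp hu, smul_smul]

lemma smax_smin_endSwitch_of_mem_stdSimplex {p u : Fin N → ℝ} {k : Fin N}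
    (hpS : p ∈ stdSimplex ℝ (Fin N)) (huS : u ∈ stdSimplex ℝ (Fin N))
    (hp : ∀ t, p t ≠ 0 → t ≤ k) (hu : ∀ t, u t ≠ 0 → k ≤ t) (a b : ℝ) :
    smax p (smin (endSwitch N a b) u) = a • p + b • u := by
  rw [smax_smin_endSwitch hp hu, hpS.2, huS.2, mul_one, mul_one]

lemma delta_mem_stdSimplex (s : Fin N) : delta s ∈ stdSimplex ℝ (Fin N) := by
  convert single_mem_stdSimplex ℝ s
  ext t
  simp [delta, Pi.single_apply]

lemma apply_eq_one_of_mem_stdSimplex {ι : Type*} [Fintype ι] {p : ι → ℝ}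
    (hp : p ∈ stdSimplex ℝ ι) {s : ι} (hs : ∀ t, p t ≠ 0 → t = s) : p s = 1 := by
  rw [← hp.2, Fintype.sum_eq_single s fun t ht => of_not_not (mt (hs t) ht)]

lemma abs_sub_apply_eq_zero_of_support {ι : Type*} {p p' : ι → ℝ} {P : ι → Prop}
    (hp : ∀ t, p t ≠ 0 → P t) (hp' : ∀ t, p' t ≠ 0 → P t) {s : ι} (hs : ¬ P s) :
    |p' s - p s| = 0 := by
  rw [of_not_not (mt (hp s) hs), of_not_not (mt (hp' s) hs), sub_zero, abs_zero]

lemma abs_mix_sub_le {x x' y y' e ε : ℝ} (he : |e| ≤ ε) (hx' : x' ∈ Set.Icc (0 : ℝ) 1)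
    (hy' : y' ∈ Set.Icc (0 : ℝ) 1) :
    |((1 / 2 + e) * x' + (1 / 2 - e) * y') - (1 / 2 * x + 1 / 2 * y)| ≤
      |x' - x| / 2 + |y' - y| / 2 + ε := by
  have hdiff : |x' - y'| ≤ 1 := by
    simpa using abs_sub_le_of_le_of_le hx'.1 hx'.2 hy'.1 hy'.2
  have hmul : |e| * |x' - y'| ≤ ε := by nlinarith [abs_nonneg e, abs_nonneg (x' - y')]
  calc _ = |(x' - x) / 2 + (y' - y) / 2 + e * (x' - y')| := by ring_nf
    _ ≤ |(x' - x) / 2| + |(y' - y) / 2| + |e * (x' - y')| := abs_add_three _ _ _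
    _ ≤ _ := by rw [abs_div, abs_div, abs_mul, abs_two]; linarith

variable {ε : ℝ} {p p' : Fin N → ℝ} {i j : Fin N}

lemma Pert.le (h : Pert N ε p p' i j) : i ≤ j := by
  induction h with
  | point => exact le_rfl
  | step _ _ _ _ _ _ _ hik hkj => exact hik.trans hkj

lemma Pert.mem_stdSimplex (hε : ε ≤ 1 / 2) (h : Pert N ε p p' i j) :
    p ∈ stdSimplex ℝ (Fin N) ∧ p' ∈ stdSimplex ℝ (Fin N) := by
  induction h with
  | point s => exact ⟨delta_mem_stdSimplex s, delta_mem_stdSimplex s⟩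
  | step _ _ hp hp' hu hu' hε' ihp ihu =>
    obtain ⟨hε'₁, hε'₂⟩ := abs_le.1 hε'
    rw [smax_smin_endSwitch_of_mem_stdSimplex ihp.1 ihu.1 (fun t ht => (hp t ht).2)
        (fun t ht => (hu t ht).1),
      smax_smin_endSwitch_of_mem_stdSimplex ihp.2 ihu.2 (fun t ht => (hp' t ht).2)
        (fun t ht => (hu' t ht).1)]
    exact ⟨convex_stdSimplex ℝ _ ihp.1 ihu.1 (by norm_num) (by norm_num) (by norm_num),
      convex_stdSimplex ℝ _ ihp.2 ihu.2 (by linarith) (by linarith) (by ring)⟩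

lemma Pert.abs_step_sub_le {u u' : Fin N → ℝ} {k : Fin N} {ε' : ℝ} (hε : ε ≤ 1 / 2)
    (hpert : Pert N ε p p' i k) (hupert : Pert N ε u u' k j) (hp : ∀ t, p t ≠ 0 → t ≤ k)
    (hp' : ∀ t, p' t ≠ 0 → t ≤ k) (hu : ∀ t, u t ≠ 0 → k ≤ t) (hu' : ∀ t, u' t ≠ 0 → k ≤ t)
    (hε' : |ε'| ≤ ε) (s : Fin N) :
    |smax p' (smin (endSwitch N (1 / 2 + ε') (1 / 2 - ε')) u') s -
        smax p (smin (endSwitch N (1 / 2) (1 / 2)) u) s| ≤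
      |p' s - p s| / 2 + |u' s - u s| / 2 + ε := by
  obtain ⟨hpS, hp'S⟩ := hpert.mem_stdSimplex hε
  obtain ⟨huS, hu'S⟩ := hupert.mem_stdSimplex hε
  rw [smax_smin_endSwitch_of_mem_stdSimplex hpS huS hp hu,
    smax_smin_endSwitch_of_mem_stdSimplex hp'S hu'S hp' hu']
  simpa using abs_mix_sub_le hε' (mem_Icc_of_mem_stdSimplex hp'S s)
    (mem_Icc_of_mem_stdSimplex hu'S s)

lemma Pert.abs_sub_apply_self_eq_zero (hε : ε ≤ 1 / 2) (h : Pert N ε p p' i i)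
    (hp : ∀ t, p t ≠ 0 → i ≤ t ∧ t ≤ i) (hp' : ∀ t, p' t ≠ 0 → i ≤ t ∧ t ≤ i) :
    |p' i - p i| = 0 := by
  obtain ⟨hpS, hp'S⟩ := h.mem_stdSimplex hε
  have hpoint : ∀ t, i ≤ t ∧ t ≤ i → t = i := fun t ht => le_antisymm ht.2 ht.1
  rw [apply_eq_one_of_mem_stdSimplex hpS fun t ht => hpoint t (hp t ht),
    apply_eq_one_of_mem_stdSimplex hp'S fun t ht => hpoint t (hp' t ht), sub_self, abs_zero]

theorem robustness_binary_general (N : ℕ) (ε : ℝ) (hε0 : 0 ≤ ε) (hε : ε ≤ 1 / 2)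
    (p p' : Fin N → ℝ) (i j : Fin N) (h : Pert N ε p p' i j) :
    (∀ s : Fin N, |p' s - p s| ≤ 3 * ε) ∧
    |p' i - p i| ≤ 2 * ε ∧ |p' j - p j| ≤ 2 * ε := by
  induction h with
  | point s => simp [hε0]
  | @step p p' u u' i k j ε' hpert hupert hp hp' hu hu' hε' ihp ihu =>
    have hmix := hpert.abs_step_sub_le hε hupert (fun t ht => (hp t ht).2)
      (fun t ht => (hp' t ht).2) (fun t ht => (hu t ht).1) (fun t ht => (hu' t ht).1) hε'
    have hp0 : ∀ s, k < s → |p' s - p s| = 0 := fun s hs =>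
      abs_sub_apply_eq_zero_of_support hp hp' fun h => h.2.not_gt hs
    have hu0 : ∀ s, s < k → |u' s - u s| = 0 := fun s hs =>
      abs_sub_apply_eq_zero_of_support hu hu' fun h => h.1.not_gt hs
    refine ⟨fun s => ?_, ?_, ?_⟩
    · rcases lt_trichotomy s k with hs | rfl | hs
      · linarith [hmix s, hu0 s hs, ihp.1 s]
      · linarith [hmix s, ihp.2.2, ihu.2.1]
      · linarith [hmix s, hp0 s hs, ihu.1 s]
    · rcases hpert.le.eq_or_lt with rfl | hik
      · linarith [hmix i, hpert.abs_sub_apply_self_eq_zero hε hp hp', ihu.2.1]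
      · linarith [hmix i, hu0 i hik, ihp.2.1]
    · rcases hupert.le.eq_or_lt with rfl | hkj
      · linarith [hmix k, hupert.abs_sub_apply_self_eq_zero hε hu hu', ihp.2.2]
      · linarith [hmix j, hp0 j hkj, ihu.2.2]

/-- Robustness of binary `N`-state distributions: for every `(p, p̃, (i, j))` in
`𝒫(ε)`, every state has error at most `3ε`, and the boundary states `i` and `j`
have error at most `2ε`. -/
theorem robustness_binary (N : ℕ) (hN : 2 ≤ N) (ε : ℝ) (hε0 : 0 ≤ ε) (hε : ε ≤ 1 / 2)
    (p p' : Fin N → ℝ) (i j : Fin N) (h : Pert N ε p p' i j) :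
    (∀ s : Fin N, |p' s - p s| ≤ 3 * ε) ∧
    |p' i - p i| ≤ 2 * ε ∧ |p' j - p j| ≤ 2 * ε :=
  robustness_binary_general N ε hε0 hε p p' i j h
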